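/- arXiv:2511.19153 — 2 statements merged into one kernel-verified Lean document; each statement's English description precedes it below -/
import Mathlib

section
/- Let G be a directed graph with unique source s and unique sink t in which every vertex lies on some s-t path. If u is the k-th proper ancestor of v in the s-dominator tree (i.e., u = dom_s(v,k)), then the vertex w = dom_t(u,k) (the k-th proper ancestor of u in the t-dominator tree, defaulting to t if u has fewer than k strict t-dominators) t-dominates v; moreover, v does not t-dominate u unless v = w. -/
/-!
The first claim goes by induction on `k`, the step being: if `a` t-dominates `idoms v` then
`w = idomt a` t-dominates `v`. Otherwise some `v`-`t` path `p` avoids `w`. Every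
`idoms v`-`v` path followed by `p` is an `idoms v`-`t` walk, which must meet `w` (a t-dominator
of `idoms v`) before reaching `p`; so `w` s-dominates `v`, hence `idoms v`. A vertex that both
s- and t-dominates `x` is `x` itself, so `w = idoms v`, and then `a` and `w` t-dominate each
other, contradicting `w ≠ a`.

For the second claim, a t-dominator `v` of `u` is `idomt^[j] u` for some `j`. If `j ≥ k`, then
`v` and `dom_t(u,k)` t-dominate each other. If `j < k`, the first claim in the reversed graph
makes `idoms^[j] v` s-dominate `u = idoms^[k] v`, a cycle in the s-dominator tree.
-/

namespace FD

variable {V : Type*}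

/-- A walk: nonempty vertex sequence with consecutive pairs edges. -/
def IsWalk (E : V → V → Prop) (l : List V) : Prop := l ≠ [] ∧ l.Chain' E

/-- A walk from `s` to `t`. -/
def IsWalkFromTo (E : V → V → Prop) (s t : V) (l : List V) : Prop :=
  IsWalk E l ∧ l.head? = some s ∧ l.getLast? = some t

/-- A path from `s` to `t`: a walk with no repeated vertices. -/
def IsPathFromTo (E : V → V → Prop) (s t : V) (l : List V) : Prop :=
  IsWalkFromTo E s t l ∧ l.Nodup

/-- `s` is the unique source: a vertex has no incoming edge iff it is `s`. -/
def UniqueSource (E : V → V → Prop) (s : V) : Prop := ∀ v, (¬ ∃ u, E u v) ↔ v = s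

/-- `t` is the unique sink: a vertex has no outgoing edge iff it is `t`. -/
def UniqueSink (E : V → V → Prop) (t : V) : Prop := ∀ v, (¬ ∃ w, E v w) ↔ v = t

/-- `u` s-dominates `v`: every `s`-`v` path contains `u`. -/
def SDom (E : V → V → Prop) (s u v : V) : Prop := ∀ p, IsPathFromTo E s v p → u ∈ p

/-- `u` t-dominates `v`: every `v`-`t` path contains `u`. -/
def TDom (E : V → V → Prop) (t u v : V) : Prop := ∀ p, IsPathFromTo E v t p → u ∈ p

/-- `l` is the chain of s-dominators of `v`, listed in dominance order from `s` to `v`. -/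
def IsSDomChain (E : V → V → Prop) (s v : V) (l : List V) : Prop :=
  l.Nodup ∧ (∀ u, u ∈ l ↔ SDom E s u v) ∧
    l.Chain' (fun a b => SDom E s a b) ∧ l.head? = some s ∧ l.getLast? = some v

/-- `l` is the chain of t-dominators of `v`, listed in order from `v` to `t`. -/
def IsTDomChain (E : V → V → Prop) (t v : V) (l : List V) : Prop :=
  l.Nodup ∧ (∀ u, u ∈ l ↔ TDom E t u v) ∧
    l.Chain' (fun a b => TDom E t b a) ∧ l.head? = some v ∧ l.getLast? = some t

/-- `x = ext(v)`: the s-dominator chain of `v` (from `s` to `v`) concatenated with the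
t-dominator chain of `v` (from `v` to `t`), with the duplicate `v` removed. -/
def IsExtension (E : V → V → Prop) (s t v : V) (x : List V) : Prop :=
  ∃ ds dt, IsSDomChain E s v ds ∧ IsTDomChain E t v dt ∧ x = ds ++ dt.tail

/-- `P` is a `C`-walk cover: a set of `s`-`t` walks such that every vertex of `C`
lies on some walk of `P`. -/
def WalkCover (E : V → V → Prop) (s t : V) (C : Set V) (P : Set (List V)) : Prop :=
  (∀ w ∈ P, IsWalkFromTo E s t w) ∧ ∀ c ∈ C, ∃ w ∈ P, c ∈ w

/-- `X` is a `C`-safe sequence: every `C`-walk cover contains a walk having `X`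
as a subsequence. -/
def SafeSeq (E : V → V → Prop) (s t : V) (C : Set V) (X : List V) : Prop :=
  ∀ P, WalkCover E s t C P → ∃ w ∈ P, X.Sublist w

/-- The list of edges traversed by a walk, in order (with multiplicity). -/
def walkEdges (l : List V) : List (V × V) := l.zip l.tail

/-- `idoms` is the immediate s-dominator (parent in the s-dominator tree) function:
`idoms s = s`, and for `v ≠ s`, `idoms v` is a strict s-dominator of `v` that is
s-dominated by every strict s-dominator of `v`. -/
def IsIdomS (E : V → V → Prop) (s : V) (idoms : V → V) : Prop :=
  idoms s = s ∧ ∀ v, v ≠ s → idoms v ≠ v ∧ SDom E s (idoms v) v ∧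
    ∀ u, u ≠ v → SDom E s u v → SDom E s u (idoms v)

/-- Immediate t-dominator (parent in the t-dominator tree) function. -/
def IsIdomT (E : V → V → Prop) (t : V) (idomt : V → V) : Prop :=
  idomt t = t ∧ ∀ v, v ≠ t → idomt v ≠ v ∧ TDom E t (idomt v) v ∧
    ∀ u, u ≠ v → TDom E t u v → TDom E t u (idomt v)

/-- In the tree with parent function `par` rooted at `root`, `c` is the unique child
of `p`. -/
def UniqueChild (par : V → V) (root c p : V) : Prop :=
  c ≠ root ∧ par c = p ∧ ∀ y, y ≠ root → par y = p → y = c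

/-- A univocal path `v₁ … v_k`: in the t-dominator tree each `v_{i+1}` has `v_i`
as its unique child, and `v_k … v_1` is a path in the s-dominator tree where each
vertex but the deepest (`v_k`) has exactly one child. -/
def IsUnivocal (idoms idomt : V → V) (s t : V) (l : List V) : Prop :=
  l ≠ [] ∧ l.Chain' (fun a b => UniqueChild idomt t a b ∧ UniqueChild idoms s b a)

/-- A maximal univocal path: not properly contained in another univocal path. -/
def IsMaximalUnivocal (idoms idomt : V → V) (s t : V) (l : List V) : Prop :=
  IsUnivocal idoms idomt s t l ∧
    ∀ l', IsUnivocal idoms idomt s t l' → l <:+: l' → l' = l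

/-- `X` is a maximal safe sequence for walk covers (covering all vertices):
it is safe and no proper supersequence of it is safe. -/
def MaximalSafe (E : V → V → Prop) (s t : V) (X : List V) : Prop :=
  SafeSeq E s t Set.univ X ∧ ∀ Y, X.Sublist Y → Y ≠ X → ¬ SafeSeq E s t Set.univ Y

/-- Edge `e` reaches edge `e'`: there is a (possibly empty) path from the head of `e`
to the tail of `e'`. -/
def EReach (E : V → V → Prop) (e e' : V × V) : Prop := Relation.ReflTransGen E e.2 e'.1

/-- `P` is a cover of the edge set `C` by `s`-`t` walks. -/
def EdgeWalkCover (E : V → V → Prop) (s t : V) (C : Set (V × V)) (P : Set (List V)) : Prop :=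
  (∀ w ∈ P, IsWalkFromTo E s t w) ∧ ∀ c ∈ C, ∃ w ∈ P, c ∈ walkEdges w

/-- A `C`-safe sequence of edges: every cover of `C` by `s`-`t` walks contains a walk
traversing the edges of `S` in order. -/
def SafeEdgeSeq (E : V → V → Prop) (s t : V) (C : Set (V × V)) (S : List (V × V)) : Prop :=
  ∀ P, EdgeWalkCover E s t C P → ∃ w ∈ P, S.Sublist (walkEdges w)
section Paths

variable {E : V → V → Prop} {a b c x y : V} {l p q : List V}

lemma IsPathFromTo.singleton (E : V → V → Prop) (a : V) : IsPathFromTo E a a [a] :=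
  ⟨⟨⟨List.cons_ne_nil a [], List.isChain_singleton a⟩, rfl, rfl⟩, List.nodup_singleton a⟩

lemma IsWalkFromTo.head_eq (h : IsWalkFromTo E a b (x :: l)) : x = a := by
  simpa using h.2.1

lemma IsWalkFromTo.exists_eq_cons (h : IsWalkFromTo E a b l) : ∃ l', l = a :: l' := by
  obtain _ | ⟨x, l'⟩ := l
  · exact absurd rfl h.1.1
  · exact ⟨l', by rw [h.head_eq]⟩

lemma IsPathFromTo.head_mem (h : IsPathFromTo E a b p) : a ∈ p :=
  List.mem_of_mem_head? h.1.2.1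

lemma IsPathFromTo.getLast_mem (h : IsPathFromTo E a b p) : b ∈ p :=
  List.mem_of_mem_getLast? h.1.2.2

lemma IsPathFromTo.cons (hE : E a b) (h : IsPathFromTo E b c p) (ha : a ∉ p) :
    IsPathFromTo E a c (a :: p) := by
  obtain ⟨⟨⟨hne, hch⟩, hhd, hlst⟩, hnd⟩ := h
  refine ⟨⟨⟨List.cons_ne_nil a p, List.isChain_cons.mpr ⟨?_, hch⟩⟩, rfl, ?_⟩,
    List.nodup_cons.mpr ⟨ha, hnd⟩⟩
  · simpa [hhd] using hE
  · simp [List.getLast?_cons, hlst]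

lemma IsPathFromTo.split (h : IsPathFromTo E a b p) (hx : x ∈ p) :
    ∃ p₁ p₂, p = p₁ ++ x :: p₂ ∧ IsPathFromTo E a x (p₁ ++ [x]) ∧
      IsPathFromTo E x b (x :: p₂) := by
  obtain ⟨p₁, p₂, rfl⟩ := List.append_of_mem hx
  obtain ⟨⟨⟨-, hch⟩, hhd, hlst⟩, hnd⟩ := h
  obtain ⟨hch₁, hch₂, hlink⟩ := List.isChain_append.mp hch
  refine ⟨p₁, p₂, rfl, ⟨⟨⟨by simp, ?_⟩, ?_, by simp⟩, ?_⟩, ⟨⟨⟨by simp, hch₂⟩, rfl, ?_⟩, ?_⟩⟩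
  · exact List.isChain_append.mpr ⟨hch₁, List.isChain_singleton x, by simpa using hlink⟩
  · cases p₁ <;> simpa using hhd
  · exact hnd.sublist ((List.append_sublist_append_left p₁).mpr (by simp))
  · rwa [List.getLast?_append_of_ne_nil _ (by simp)] at hlst
  · exact hnd.sublist (List.sublist_append_right p₁ _)

lemma IsPathFromTo.eq_of_forall_mem (h : IsPathFromTo E a b p) (hx : x ∈ p)
    (h₁ : ∀ q, IsPathFromTo E a x q → y ∈ q) (h₂ : ∀ q, IsPathFromTo E x b q → y ∈ q) :
    y = x := by
  obtain ⟨p₁, p₂, rfl, hpre, hsuf⟩ := h.split hx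
  rcases List.mem_append.mp (h₁ _ hpre) with hy | hy
  · exact absurd (h₂ _ hsuf) (List.disjoint_of_nodup_append h.2 hy)
  · simpa using hy

lemma IsWalkFromTo.append (h₁ : IsWalkFromTo E a b p) (h₂ : IsWalkFromTo E b c (b :: q)) :
    IsWalkFromTo E a c (p ++ q) := by
  obtain ⟨⟨hne, hch₁⟩, hhd, hlst⟩ := h₁
  obtain ⟨⟨-, hch₂⟩, -, hlst₂⟩ := h₂
  refine ⟨⟨by simp [hne], List.isChain_append.mpr ⟨hch₁, hch₂.tail, ?_⟩⟩, ?_, ?_⟩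
  · intro x hx y hy
    rw [hlst, Option.mem_some_iff] at hx
    subst hx
    exact List.isChain_cons.mp hch₂ |>.1 y hy
  · rwa [List.head?_append_of_ne_nil _ hne]
  · cases q with
    | nil => simp_all
    | cons y q => rwa [List.getLast?_append_of_ne_nil _ (by simp), ← List.getLast?_cons_cons]

lemma IsWalkFromTo.exists_path_subset :
    ∀ {a l}, IsWalkFromTo E a b l → ∃ p, IsPathFromTo E a b p ∧ p ⊆ l
  | _, [], h => absurd rfl h.1.1
  | a, [x], h => by
    obtain rfl := h.head_eq
    obtain rfl : x = b := by simpa using h.2.2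
    exact ⟨[x], .singleton E x, List.Subset.refl _⟩
  | a, x :: y :: l, h => by
    obtain rfl := h.head_eq
    obtain ⟨⟨-, hch⟩, -, hlst⟩ := h
    obtain ⟨hE, hch'⟩ := List.isChain_cons_cons.mp hch
    obtain ⟨q, hq, hql⟩ := IsWalkFromTo.exists_path_subset (a := y) (l := y :: l)
      ⟨⟨List.cons_ne_nil _ _, hch'⟩, rfl, by simpa using hlst⟩
    by_cases hxq : x ∈ q
    · obtain ⟨q₁, q₂, rfl, -, hsuf⟩ := hq.split hxq
      exact ⟨_, hsuf, List.Subset.trans (List.subset_append_right _ _)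
        (List.Subset.trans hql (List.subset_cons_self _ _))⟩
    · exact ⟨x :: q, hq.cons hE hxq, List.cons_subset_cons x hql⟩

lemma isPathFromTo_flip_reverse :
    IsPathFromTo (flip E) b a p.reverse ↔ IsPathFromTo E a b p := by
  simp only [IsPathFromTo, IsWalkFromTo, IsWalk, List.head?_reverse, List.getLast?_reverse,
    List.nodup_reverse, ne_eq, List.reverse_eq_nil_iff]
  exact and_congr (and_congr (and_congr Iff.rfl List.isChain_reverse) and_comm) Iff.rfl

end Paths

section Dominators

variable {E : V → V → Prop} {s t a b c u v w x : V} {l p : List V}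

lemma tdom_flip_iff : TDom (flip E) s u v ↔ SDom E s u v := by
  unfold TDom SDom
  rw [List.reverse_involutive.surjective.forall]
  simp only [isPathFromTo_flip_reverse, List.mem_reverse]

lemma sdom_flip_iff : SDom (flip E) t u v ↔ TDom E t u v := by
  unfold TDom SDom
  rw [List.reverse_involutive.surjective.forall]
  simp only [isPathFromTo_flip_reverse, List.mem_reverse]

lemma tdom_refl (t v : V) : TDom E t v v := fun _ hp => hp.head_mem

lemma tdom_target (v : V) : TDom E t t v := fun _ hp => hp.getLast_mem

lemma TDom.eq_target (h : TDom E t a t) : a = t := by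
  simpa using h [t] (.singleton E t)

lemma TDom.trans (hab : TDom E t a b) (hbc : TDom E t b c) : TDom E t a c := by
  intro p hp
  obtain ⟨p₁, p₂, rfl, -, hsuf⟩ := hp.split (hbc p hp)
  exact List.mem_append_right p₁ (hab _ hsuf)

lemma TDom.antisymm (hab : TDom E t a b) (hba : TDom E t b a) (hp : IsPathFromTo E a t p) :
    a = b :=
  hp.eq_of_forall_mem (hba p hp) (fun _ hq => hq.head_mem) hab

lemma TDom.mem_of_isWalkFromTo (h : TDom E t a b) (hl : IsWalkFromTo E b t l) : a ∈ l := by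
  obtain ⟨p, hp, hpl⟩ := hl.exists_path_subset
  exact hpl (h p hp)

lemma SDom.antisymm (hab : SDom E s a b) (hba : SDom E s b a) (hp : IsPathFromTo E s a p) :
    a = b :=
  TDom.antisymm (tdom_flip_iff.mpr hab) (tdom_flip_iff.mpr hba)
    (isPathFromTo_flip_reverse.mpr hp)

lemma eq_of_sdom_of_tdom (hall : ∀ a : V, ∃ p, IsPathFromTo E s t p ∧ a ∈ p)
    (hs : SDom E s w x) (ht : TDom E t w x) : w = x := by
  obtain ⟨p, hp, hx⟩ := hall x
  exact hp.eq_of_forall_mem hx hs ht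

lemma exists_path_from (hall : ∀ a : V, ∃ p, IsPathFromTo E s t p ∧ a ∈ p) (a : V) :
    ∃ p, IsPathFromTo E s a p := by
  obtain ⟨p, hp, ha⟩ := hall a
  obtain ⟨_, _, -, hpre, -⟩ := hp.split ha
  exact ⟨_, hpre⟩

lemma exists_path_to (hall : ∀ a : V, ∃ p, IsPathFromTo E s t p ∧ a ∈ p) (a : V) :
    ∃ p, IsPathFromTo E a t p := by
  obtain ⟨p, hp, ha⟩ := hall a
  obtain ⟨_, _, -, -, hsuf⟩ := hp.split ha
  exact ⟨_, hsuf⟩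

lemma forall_exists_path_flip (hall : ∀ a : V, ∃ p, IsPathFromTo E s t p ∧ a ∈ p) (a : V) :
    ∃ p, IsPathFromTo (flip E) t s p ∧ a ∈ p := by
  obtain ⟨p, hp, ha⟩ := hall a
  exact ⟨p.reverse, isPathFromTo_flip_reverse.mpr hp, List.mem_reverse.mpr ha⟩

lemma sdom_of_tdom_of_not_mem (hxv : SDom E s x v) (hwx : TDom E t w x)
    (hp : IsPathFromTo E v t p) (hwp : w ∉ p) : SDom E s w v := by
  intro r hr
  obtain ⟨r₁, r₂, rfl, -, hsuf⟩ := hr.split (hxv r hr)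
  obtain ⟨p', rfl⟩ := hp.1.exists_eq_cons
  have hwalk := hsuf.1.append hp.1
  rcases List.mem_append.mp (hwx.mem_of_isWalkFromTo hwalk) with h | h
  · exact List.mem_append_right r₁ h
  · exact absurd (List.mem_cons_of_mem v h) hwp

end Dominators

section Idom

variable {E : V → V → Prop} {s t v : V} {idoms idomt : V → V}

lemma isIdomS_flip_iff : IsIdomS (flip E) t idomt ↔ IsIdomT E t idomt := by
  simp only [IsIdomS, IsIdomT, sdom_flip_iff]

lemma isIdomT_flip_iff : IsIdomT (flip E) s idoms ↔ IsIdomS E s idoms := by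
  simp only [IsIdomS, IsIdomT, tdom_flip_iff]

lemma IsIdomT.tdom_apply (hidt : IsIdomT E t idomt) (v : V) : TDom E t (idomt v) v := by
  by_cases hv : v = t
  · rw [hv, hidt.1]
    exact tdom_refl t t
  · exact (hidt.2 v hv).2.1

lemma IsIdomT.tdom_iterate (hidt : IsIdomT E t idomt) (n : ℕ) (v : V) :
    TDom E t (idomt^[n] v) v := by
  induction n with
  | zero => exact tdom_refl t v
  | succ n ih =>
    rw [Function.iterate_succ_apply']
    exact (hidt.tdom_apply _).trans ih

lemma IsIdomS.sdom_iterate (hids : IsIdomS E s idoms) (n : ℕ) (v : V) :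
    SDom E s (idoms^[n] v) v :=
  tdom_flip_iff.mp ((isIdomT_flip_iff.mpr hids).tdom_iterate n v)

lemma IsIdomS.eq_of_iterate_eq_self (hids : IsIdomS E s idoms)
    (hall : ∀ a : V, ∃ p, IsPathFromTo E s t p ∧ a ∈ p) {n : ℕ} (hn : 0 < n)
    (h : idoms^[n] v = v) : v = s := by
  obtain ⟨n, rfl⟩ := Nat.exists_eq_succ_of_ne_zero hn.ne'
  by_contra hv
  obtain ⟨hne, hdom, -⟩ := hids.2 v hv
  have hback : SDom E s v (idoms v) := by
    have := hids.sdom_iterate n (idoms v)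
    rwa [← Function.iterate_succ_apply, h] at this
  obtain ⟨q, hq⟩ := exists_path_from hall (idoms v)
  exact hne (hdom.antisymm hback hq)

theorem IsIdomT.exists_iterate_eq_of_tdom (hidt : IsIdomT E t idomt) {u : V} {p : List V}
    (hp : IsPathFromTo E u t p) (h : TDom E t v u) : ∃ j, idomt^[j] u = v := by
  by_cases hvu : v = u
  · exact ⟨0, hvu.symm⟩
  have hut : u ≠ t := by
    rintro rfl
    exact hvu h.eq_target
  obtain ⟨hne, hdom, hmin⟩ := hidt.2 u hut
  obtain ⟨p₁, p₂, hpeq, -, hsuf⟩ := hp.split (hdom _ hp)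
  have hp₁ : p₁ ≠ [] := by
    rintro rfl
    exact hne (hpeq ▸ hp).1.head_eq
  obtain ⟨j, hj⟩ := exists_iterate_eq_of_tdom hidt hsuf (hmin v hvu h)
  exact ⟨j + 1, hj⟩
termination_by p.length
decreasing_by
  simp only [hpeq, List.length_append, List.length_cons]
  have := List.length_pos_of_ne_nil hp₁
  omega

end Idom

section Main

variable {E : V → V → Prop} {s t v w a : V} {idoms idomt : V → V}

lemma IsIdomS.tdom_or_eq_of_tdom_idoms (hids : IsIdomS E s idoms)
    (hall : ∀ a : V, ∃ p, IsPathFromTo E s t p ∧ a ∈ p) (hv : v ≠ s)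
    (hw : TDom E t w (idoms v)) : TDom E t w v ∨ w = idoms v := by
  refine or_iff_not_imp_left.mpr fun hwv => ?_
  obtain ⟨p, hp, hwp⟩ : ∃ p, IsPathFromTo E v t p ∧ w ∉ p := by
    simpa [TDom] using hwv
  obtain ⟨-, hxv, hmin⟩ := hids.2 v hv
  have hsv : SDom E s w v := sdom_of_tdom_of_not_mem hxv hw hp hwp
  have hne : w ≠ v := fun h => hwp (h ▸ hp.head_mem)
  exact eq_of_sdom_of_tdom hall (hmin w hne hsv) hw

lemma tdom_idomt_of_tdom_idoms (hall : ∀ a : V, ∃ p, IsPathFromTo E s t p ∧ a ∈ p)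
    (hids : IsIdomS E s idoms) (hidt : IsIdomT E t idomt) (hv : v ≠ s)
    (ha : TDom E t a (idoms v)) : TDom E t (idomt a) v := by
  by_cases hat : a = t
  · rw [hat, hidt.1]
    exact tdom_target v
  obtain ⟨hne, hwa, -⟩ := hidt.2 a hat
  refine (hids.tdom_or_eq_of_tdom_idoms hall hv (hwa.trans ha)).resolve_right fun hw => ?_
  obtain ⟨p, hp⟩ := exists_path_to hall a
  exact hne (hw.trans (ha.antisymm (hw ▸ hwa) hp).symm)

lemma tdom_iterate_idomt_iterate_idoms (hall : ∀ a : V, ∃ p, IsPathFromTo E s t p ∧ a ∈ p)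
    (hids : IsIdomS E s idoms) (hidt : IsIdomT E t idomt) :
    ∀ (k : ℕ) (v : V), (∀ i < k, idoms^[i] v ≠ s) → TDom E t (idomt^[k] (idoms^[k] v)) v
  | 0, v, _ => tdom_refl t v
  | k + 1, v, hanc => by
    rw [Function.iterate_succ_apply idoms, Function.iterate_succ_apply' idomt]
    refine tdom_idomt_of_tdom_idoms hall hids hidt (hanc 0 k.succ_pos)
      (tdom_iterate_idomt_iterate_idoms hall hids hidt k (idoms v) fun i hi => ?_)
    rw [← Function.iterate_succ_apply]
    exact hanc (i + 1) (by omega)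

lemma iterate_idomt_iterate_idoms_ne (hall : ∀ a : V, ∃ p, IsPathFromTo E s t p ∧ a ∈ p)
    (hids : IsIdomS E s idoms) (hidt : IsIdomT E t idomt) {j k : ℕ} (hjk : j < k)
    (hanc : ∀ i < k, idoms^[i] v ≠ s) (hvt : v ≠ t) : idomt^[j] (idoms^[k] v) ≠ v := by
  intro hj
  have hanc' : ∀ i < j, idomt^[i] (idoms^[k] v) ≠ t := by
    intro i hi hit
    apply hvt
    rw [← hj, ← Nat.sub_add_cancel hi.le, Function.iterate_add_apply, hit,
      Function.iterate_fixed hidt.1]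
  have hdual : SDom E s (idoms^[j] v) (idoms^[k] v) := by
    have := tdom_iterate_idomt_iterate_idoms (forall_exists_path_flip hall)
      (isIdomS_flip_iff.mpr hidt) (isIdomT_flip_iff.mpr hids) j _ hanc'
    rwa [hj, tdom_flip_iff] at this
  have hk : idoms^[k] v = idoms^[k - j] (idoms^[j] v) := by
    rw [← Function.iterate_add_apply, Nat.sub_add_cancel hjk.le]
  have hback : SDom E s (idoms^[k] v) (idoms^[j] v) := by
    rw [hk]
    exact hids.sdom_iterate _ _
  obtain ⟨p, hp⟩ := exists_path_from hall (idoms^[j] v)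
  have hcyc : idoms^[k - j] (idoms^[j] v) = idoms^[j] v := by
    rw [← hk]
    exact (hdual.antisymm hback hp).symm
  exact hanc j hjk (hids.eq_of_iterate_eq_self hall (Nat.sub_pos_of_lt hjk) hcyc)

end Main

theorem stmt1_general {V : Type*} (E : V → V → Prop) (s t : V)
    (hall : ∀ a : V, ∃ p, IsPathFromTo E s t p ∧ a ∈ p)
    (idoms idomt : V → V) (hids : IsIdomS E s idoms) (hidt : IsIdomT E t idomt)
    (u v : V) (k : ℕ)
    (hanc : ∀ i < k, idoms^[i] v ≠ s)
    (hu : u = idoms^[k] v) :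
    TDom E t (idomt^[k] u) v ∧ (TDom E t v u → v = idomt^[k] u) := by
  subst hu
  have hw := tdom_iterate_idomt_iterate_idoms hall hids hidt k v hanc
  refine ⟨hw, fun hvu => ?_⟩
  by_cases hvt : v = t
  · subst hvt
    exact hw.eq_target.symm
  obtain ⟨p, hp⟩ := exists_path_to hall (idoms^[k] v)
  obtain ⟨j, hj⟩ := hidt.exists_iterate_eq_of_tdom hp hvu
  obtain hjk | hkj := lt_or_ge j k
  · exact absurd hj (iterate_idomt_iterate_idoms_ne hall hids hidt hjk hanc hvt)
  · have hvw := hidt.tdom_iterate (j - k) (idomt^[k] (idoms^[k] v))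
    rw [← Function.iterate_add_apply, Nat.sub_add_cancel hkj, hj] at hvw
    obtain ⟨q, hq⟩ := exists_path_to hall v
    exact hvw.antisymm hw hq

/-- if `u` is the `k`-th proper ancestor of `v` in the s-dominator tree,
then `dom_t(u,k)` t-dominates `v`, and `v` does not t-dominate `u` unless `v = dom_t(u,k)`. -/
theorem stmt1 {V : Type*} [Fintype V] (E : V → V → Prop) (s t : V)
    (hs : UniqueSource E s) (ht : UniqueSink E t)
    (hall : ∀ a : V, ∃ p, IsPathFromTo E s t p ∧ a ∈ p)
    (idoms idomt : V → V) (hids : IsIdomS E s idoms) (hidt : IsIdomT E t idomt)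
    (u v : V) (k : ℕ) (hk : 0 < k)
    (hanc : ∀ i < k, idoms^[i] v ≠ s)
    (hu : u = idoms^[k] v) :
    TDom E t (idomt^[k] u) v ∧ (TDom E t v u → v = idomt^[k] u) :=
  stmt1_general E s t hall idoms idomt hids hidt u v k hanc hu

end FD
end

section
/- Let G be a directed graph with unique source s and unique sink t in which every vertex lies on an s-t path. For every vertex v, the extension ext(v) — the chain of s-dominators of v from s to v, followed by the chain of t-dominators of v from v to t — is a safe sequence: every set of s-t walks that covers all vertices of G contains a walk having ext(v) as a subsequence. -/
namespace FD

variable {V : Type*}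

/-
Take a walk of the cover through `v` and split it at `v`. Every s-dominator of the endpoint
of an `s`-walk lies on that walk (the walk contains a path), so peeling the s-dominator chain
of `v` off from its end embeds it, in order, into the prefix ending at `v`. The t-dominator
chain of `v` is an s-dominator chain in the reversed graph, so it embeds into the suffix
starting at `v` in the same way.
-/

section Walks

variable {E : V → V → Prop}

theorem IsWalkFromTo.reverse {a b : V} {w : List V} (h : IsWalkFromTo E a b w) :
    IsWalkFromTo (flip E) b a w.reverse := by
  obtain ⟨⟨hne, hch⟩, ha, hb⟩ := h
  exact ⟨⟨List.reverse_ne_nil_iff.2 hne, List.isChain_reverse.2 hch⟩,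
    by simpa using hb, by simpa using ha⟩

theorem TDom.sdom_flip {t u v : V} (h : TDom E t u v) : SDom (flip E) t u v := fun p hp =>
  List.mem_reverse.1 (h p.reverse ⟨hp.1.reverse, List.nodup_reverse.2 hp.2⟩)

theorem IsWalkFromTo.split {a b c : V} {l₁ l₂ : List V}
    (h : IsWalkFromTo E a b (l₁ ++ c :: l₂)) :
    IsWalkFromTo E a c (l₁ ++ [c]) ∧ IsWalkFromTo E c b (c :: l₂) := by
  obtain ⟨⟨-, hch⟩, ha, hb⟩ := h
  obtain ⟨hch₁, hch₂⟩ := List.isChain_split.1 hch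
  refine ⟨⟨⟨by simp, hch₁⟩, ?_, by simp⟩, ⟨⟨by simp, hch₂⟩, rfl, ?_⟩⟩
  · cases l₁ <;> simpa using ha
  · simpa [List.getLast?_cons] using hb

theorem IsWalkFromTo.exists_path {a b : V} {w : List V} (h : IsWalkFromTo E a b w) :
    ∃ p, IsPathFromTo E a b p ∧ p ⊆ w := by
  induction w generalizing a with
  | nil => exact absurd rfl h.1.1
  | cons a' w ih =>
    obtain ⟨⟨-, hch⟩, ha, hb⟩ := h
    obtain rfl : a' = a := by simpa using ha
    cases w with
    | nil =>
      obtain rfl : a' = b := by simpa using hb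
      exact ⟨[a'], ⟨⟨⟨by simp, List.isChain_singleton _⟩, rfl, rfl⟩, List.nodup_singleton _⟩,
        List.Subset.refl _⟩
    | cons c w =>
      obtain ⟨hac, hch⟩ := List.isChain_cons_cons.1 hch
      obtain ⟨p, ⟨⟨⟨hpne, hpch⟩, hpc, hpb⟩, hpnd⟩, hpw⟩ :=
        ih ⟨⟨by simp, hch⟩, rfl, by simpa [List.getLast?_cons] using hb⟩
      by_cases hap : a' ∈ p
      · -- shortcut the cycle through `a'` by keeping only the part of `p` from `a'` on
        obtain ⟨p₁, p₂, rfl⟩ := List.append_of_mem hap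
        have hsuf : a' :: p₂ <:+ p₁ ++ a' :: p₂ := List.suffix_append _ _
        refine ⟨a' :: p₂, ⟨⟨⟨by simp, hpch.suffix hsuf⟩, rfl, ?_⟩, hpnd.sublist hsuf.sublist⟩,
          List.Subset.trans hsuf.subset (List.Subset.trans hpw (List.subset_cons_self _ _))⟩
        simpa [List.getLast?_cons] using hpb
      · refine ⟨a' :: p, ⟨⟨⟨by simp, hpch.cons (by simpa [hpc] using hac)⟩, rfl, ?_⟩,
          List.nodup_cons.2 ⟨hap, hpnd⟩⟩, List.cons_subset_cons _ hpw⟩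
        simp [List.getLast?_cons, hpb]

theorem SDom.mem_of_isWalkFromTo {s u z : V} {w : List V} (h : SDom E s u z)
    (hw : IsWalkFromTo E s z w) : u ∈ w :=
  let ⟨p, hp, hpw⟩ := hw.exists_path
  hpw (h p hp)

theorem sublist_of_isChain_sdom {s z : V} {c w : List V} (hc : c.IsChain (SDom E s))
    (hnd : c.Nodup) (hz : c.getLast? = some z) (hw : IsWalkFromTo E s z w) : c.Sublist w := by
  induction c using List.reverseRecOn generalizing z w with
  | nil => simp at hz
  | append_singleton d z' ih =>
    obtain rfl : z = z' := by simpa [eq_comm] using hz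
    cases hu : d.getLast? with
    | none =>
      rw [List.getLast?_eq_none_iff] at hu
      subst hu
      simpa using List.mem_of_getLast? hw.2.2
    | some u =>
      have huz : SDom E s u z := (List.isChain_append.1 hc).2.2 u hu z rfl
      have hune : u ≠ z := (List.nodup_append.1 hnd).2.2 u (List.mem_of_getLast? hu) z (by simp)
      obtain ⟨w₁, w₂, rfl⟩ := List.append_of_mem (huz.mem_of_isWalkFromTo hw)
      obtain ⟨hw₁, hw₂⟩ := hw.split
      have hzw₂ : z ∈ w₂ :=
        (List.mem_cons.1 (List.mem_of_getLast? hw₂.2.2)).resolve_left hune.symm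
      simpa using (ih hc.left_of_append hnd.of_append_left hu hw₁).append
        (List.singleton_sublist.2 hzw₂)

theorem IsSDomChain.sublist_of_isWalkFromTo {s v : V} {ds w : List V}
    (hds : IsSDomChain E s v ds) (hw : IsWalkFromTo E s v w) : ds.Sublist w :=
  sublist_of_isChain_sdom hds.2.2.1 hds.1 hds.2.2.2.2 hw

theorem IsTDomChain.sublist_of_isWalkFromTo {t v : V} {dt w : List V}
    (hdt : IsTDomChain E t v dt) (hw : IsWalkFromTo E v t w) : dt.Sublist w := by
  obtain ⟨hnd, -, hch, hv, -⟩ := hdt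
  have hrev : dt.reverse.IsChain (SDom (flip E) t) :=
    List.isChain_reverse.2 (hch.imp fun _ _ => TDom.sdom_flip)
  exact List.reverse_sublist.1 <| sublist_of_isChain_sdom hrev (List.nodup_reverse.2 hnd)
    (by simpa using hv) hw.reverse

theorem IsExtension.sublist_of_mem {s t v : V} {x w : List V} (hx : IsExtension E s t v x)
    (hw : IsWalkFromTo E s t w) (hv : v ∈ w) : x.Sublist w := by
  obtain ⟨ds, dt, hds, hdt, rfl⟩ := hx
  obtain ⟨w₁, w₂, rfl⟩ := List.append_of_mem hv
  obtain ⟨hw₁, hw₂⟩ := hw.split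
  have hdt₂ := hdt.sublist_of_isWalkFromTo hw₂
  rw [← List.cons_head?_tail hdt.2.2.2.1, List.cons_sublist_cons] at hdt₂
  simpa using (hds.sublist_of_isWalkFromTo hw₁).append hdt₂

end Walks

theorem stmt10_general {V : Type*} (E : V → V → Prop) (s t : V)
    (v : V) (x : List V) (hx : IsExtension E s t v x) :
    SafeSeq E s t Set.univ x := by
  rintro P ⟨hPwalk, hPcover⟩
  obtain ⟨w, hwP, hvw⟩ := hPcover v (Set.mem_univ v)
  exact ⟨w, hwP, hx.sublist_of_mem (hPwalk w hwP) hvw⟩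

/-- for every vertex `v`, the extension `ext v` is a safe sequence:
every walk cover of all vertices contains a walk having `ext v` as a subsequence. -/
theorem stmt10 {V : Type*} [Fintype V] (E : V → V → Prop) (s t : V)
    (hs : UniqueSource E s) (ht : UniqueSink E t)
    (hall : ∀ a : V, ∃ p, IsPathFromTo E s t p ∧ a ∈ p)
    (v : V) (x : List V) (hx : IsExtension E s t v x) :
    SafeSeq E s t Set.univ x :=
  stmt10_general E s t v x hx

end FD
end
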